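/- Let T be a contraction on H whose non-unitary part t := T|_{K^⊥} : K^⊥ → K⋆^⊥ satisfies ‖t‖ < 1, and let t* : K⋆^⊥ → K^⊥ denote its adjoint. Fix λ with |λ| < 1 and let a ∈ W_λ ∩ A_T^⊥s, with components a₊ ∈ K^⊥ and a₋ ∈ K⋆^⊥ given by the orthogonal decomposition A_T^⊥s = A_T ⊕ (K^⊥ × {0}) ⊕ ({0} × K⋆^⊥), i.e. a = (x₀, Tx₀) + (a₊, 0) + (0, a₋). Define Γ'₊a := (Id − t*t)^{-1/2}a₊ − t*(Id − tt*)^{-1/2}a₋ ∈ K^⊥ and Γ'₋a := t(Id − t*t)^{-1/2}a₊ − (Id − tt*)^{-1/2}a₋ ∈ K⋆^⊥. Then Θ_T(λ)(Γ'₊a) + Γ'₋a = 0, where Θ_T(λ)u := −Tu + λ𝔇⋆(Id − λT*)⁻¹𝔇u for u ∈ K^⊥ is the Sz.-Nagy–Foias characteristic function. -/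

import Mathlib

/-!
Write `a = (x, λx)`, so that `x = x₀ + a₊` and `λx = Tx₀ + a₋`. The operators `𝔇`, `𝔇⋆` vanish
on `K`, `K⋆` and act on `K^⊥`, `K⋆^⊥` as the square roots of `Id − t*t`, `Id − tt*`. Hence the
intertwining `(Id − t*t)^{1/2} t* = t* (Id − tt*)^{1/2}` gives `𝔇Γ'₊a = a₊ − T*a₋ = (Id − λT*)x`
(using `T*Tx₀ = x₀`), while `λ𝔇⋆x = 𝔇⋆(Tx₀ + a₋) = (Id − tt*)^{1/2}a₋`, and the claim reduces to
`(Id − tt*)^{1/2} = (Id − tt*)(Id − tt*)^{-1/2}`. The intertwining follows from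
`t*(Id − tt*) = (Id − t*t)t*` by approximating the square root uniformly by polynomials on the
spectra.
-/

open scoped InnerProductSpace Topology Polynomial
open ContinuousLinearMap Filter
open Polynomial (aeval aeval_X)

theorem exists_seq_polynomial_tendstoUniformlyOn {a b : ℝ} {f : ℝ → ℝ}
    (hf : ContinuousOn f (Set.Icc a b)) :
    ∃ p : ℕ → ℝ[X], TendstoUniformlyOn (fun n x ↦ (p n).eval x) f atTop (Set.Icc a b) := by
  choose p hp using fun n : ℕ ↦
    exists_polynomial_near_of_continuousOn a b f hf (1 / (n + 1)) Nat.one_div_pos_of_nat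
  refine ⟨p, Metric.tendstoUniformlyOn_iff.2 fun ε hε ↦ ?_⟩
  obtain ⟨N, hN⟩ := exists_nat_one_div_lt hε
  filter_upwards [eventually_ge_atTop N] with n hn x hx
  rw [Real.dist_eq, abs_sub_comm]
  refine (hp n x hx).trans (lt_of_le_of_lt ?_ hN)
  gcongr

theorem cfc_sqrt_mul_self {B : Type*} [CStarAlgebra B] [PartialOrder B] [StarOrderedRing B]
    {a : B} (ha : 0 ≤ a) : cfc Real.sqrt (a * a) = a := by
  rw [← cfcₙ_eq_cfc, ← CFC.sqrt_eq_real_sqrt (a * a), CFC.sqrt_mul_self a]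

theorem comp_aeval_eq_aeval_comp {E F : Type*} [NormedAddCommGroup E] [NormedSpace ℂ E]
    [NormedAddCommGroup F] [NormedSpace ℂ F] {A : E →L[ℂ] F} {b : E →L[ℂ] E} {c : F →L[ℂ] F}
    (h : A ∘L b = c ∘L A) (q : ℝ[X]) :
    A ∘L aeval b q = aeval c q ∘L A := by
  induction q using Polynomial.induction_on with
  | C r => ext x; simp [Algebra.algebraMap_eq_smul_one]
  | add p q hp hq => rw [map_add, map_add, comp_add, ContinuousLinearMap.add_comp, hp, hq]
  | monomial n r ih =>
    rw [pow_succ, ← mul_assoc, map_mul, map_mul (aeval c), aeval_X, aeval_X, mul_def, mul_def,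
      ← comp_assoc, ih, comp_assoc, h, comp_assoc]

theorem tendsto_aeval_cfc {B : Type*} [CStarAlgebra B] {d : B} (hd : IsSelfAdjoint d)
    {p : ℕ → ℝ[X]} {f : ℝ → ℝ} {s : Set ℝ}
    (hp : TendstoUniformlyOn (fun n x ↦ (p n).eval x) f atTop s) (hs : spectrum ℝ d ⊆ s) :
    Tendsto (fun n ↦ aeval d (p n)) atTop (𝓝 (cfc f d)) := by
  simp_rw [← cfc_polynomial _ d]
  exact tendsto_cfc_fun (hp.mono hs) (.of_forall fun n ↦ (p n).continuousOn)

theorem isUnit_one_sub_smul_of_norm_le_one {B : Type*} [NormedRing B] [NormedAlgebra ℂ B]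
    [CompleteSpace B] {a : B} (ha : ‖a‖ ≤ 1) {z : ℂ} (hz : ‖z‖ < 1) : IsUnit (1 - z • a) := by
  refine isUnit_one_sub_of_norm_lt_one ?_
  rw [norm_smul]
  exact (mul_le_of_le_one_right (norm_nonneg _) ha).trans_lt hz

section HilbertOperators

variable {E F : Type*} [NormedAddCommGroup E] [InnerProductSpace ℂ E] [CompleteSpace E]
  [NormedAddCommGroup F] [InnerProductSpace ℂ F] [CompleteSpace F]
  {A : E →L[ℂ] F} {b : E →L[ℂ] E} {c : F →L[ℂ] F}

theorem comp_cfc_eq_cfc_comp (h : A ∘L b = c ∘L A) (hb : IsSelfAdjoint b)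
    (hc : IsSelfAdjoint c) {f : ℝ → ℝ} (hf : Continuous f) :
    A ∘L cfc f b = cfc f c ∘L A := by
  have hs := (ContinuousFunctionalCalculus.isCompact_spectrum (R := ℝ) b).union
    (ContinuousFunctionalCalculus.isCompact_spectrum (R := ℝ) c)
  obtain ⟨lo, hlo⟩ := hs.bddBelow
  obtain ⟨hi, hhi⟩ := hs.bddAbove
  obtain ⟨p, hp⟩ := exists_seq_polynomial_tendstoUniformlyOn hf.continuousOn (a := lo) (b := hi)
  have hlim_b := tendsto_aeval_cfc hb hp fun x hx ↦ ⟨hlo (.inl hx), hhi (.inl hx)⟩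
  have hlim_c := tendsto_aeval_cfc hc hp fun x hx ↦ ⟨hlo (.inr hx), hhi (.inr hx)⟩
  have hA : Continuous fun X : E →L[ℂ] E ↦ A ∘L X := by fun_prop
  have hA' : Continuous fun X : F →L[ℂ] F ↦ X ∘L A := by fun_prop
  refine tendsto_nhds_unique ((hA.tendsto _).comp hlim_b) ?_
  simp_rw [Function.comp_def, comp_aeval_eq_aeval_comp h]
  exact (hA'.tendsto _).comp hlim_c

theorem comp_eq_comp_of_comp_mul_self {R : E →L[ℂ] E} {R' : F →L[ℂ] F} (hR : 0 ≤ R)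
    (hR' : 0 ≤ R') (h : A ∘L (R * R) = (R' * R') ∘L A) : A ∘L R = R' ∘L A := by
  rw [← cfc_sqrt_mul_self hR, ← cfc_sqrt_mul_self hR']
  exact comp_cfc_eq_cfc_comp h (sq R ▸ (IsSelfAdjoint.of_nonneg hR).pow 2)
    (sq R' ▸ (IsSelfAdjoint.of_nonneg hR').pow 2) Real.continuous_sqrt

theorem defect_comp_adjoint_eq_adjoint_comp_defect {t : E →L[ℂ] F} {Rp : E →L[ℂ] E}
    {Rm : F →L[ℂ] F} (hRp : Rp.IsPositive) (hRp2 : Rp ∘L Rp = 1 - adjoint t ∘L t)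
    (hRm : Rm.IsPositive) (hRm2 : Rm ∘L Rm = 1 - t ∘L adjoint t) :
    Rp ∘L adjoint t = adjoint t ∘L Rm := by
  refine (comp_eq_comp_of_comp_mul_self ((nonneg_iff_isPositive _).2 hRm)
    ((nonneg_iff_isPositive _).2 hRp) ?_).symm
  rw [mul_def, mul_def, hRm2, hRp2]
  simp only [comp_sub, sub_comp, comp_id, id_comp, one_def, comp_assoc]

theorem sqrt_eq_subtypeL_comp_comp_orthogonalProjectionOnto (K : Submodule ℂ E)
    [K.HasOrthogonalProjection] {B : E →L[ℂ] E} {R : Kᗮ →L[ℂ] Kᗮ} (hR : R.IsPositive)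
    (hBK : K ≤ LinearMap.ker (B : E →ₗ[ℂ] E)) (hRB : ∀ v : Kᗮ, (R (R v) : E) = B v) :
    CFC.sqrt B = Kᗮ.subtypeL ∘L R ∘L Kᗮ.orthogonalProjectionOnto := by
  refine CFC.sqrt_unique ?_ ?_
  · ext x
    have hxK : x - Kᗮ.starProjection x ∈ K := by
      simp only [Submodule.starProjection_orthogonal_val, sub_sub_cancel,
        Submodule.starProjection_apply_mem]
    have hBx : B x = B (Kᗮ.starProjection x) := sub_eq_zero.1 (by simpa using hBK hxK)
    simp only [mul_apply_eq_comp, comp_apply, Submodule.subtypeL_apply,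
      Submodule.orthogonalProjectionOnto_mem_subspace_eq_self]
    rw [hRB, hBx, Submodule.starProjection_apply]
  · rw [nonneg_iff_isPositive]
    simpa [Kᗮ.adjoint_subtypeL] using hR.conj_adjoint Kᗮ.subtypeL

theorem sqrt_one_sub_eq_of_restrict (K : Submodule ℂ E) [K.HasOrthogonalProjection]
    {S : E →L[ℂ] E} {s : Kᗮ →L[ℂ] Kᗮ} (hs : ∀ v, (s v : E) = S v)
    (hK : K ≤ LinearMap.ker ((1 - S : E →L[ℂ] E) : E →ₗ[ℂ] E)) {R : Kᗮ →L[ℂ] Kᗮ}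
    (hR : R.IsPositive) (hR2 : R ∘L R = 1 - s) :
    CFC.sqrt (1 - S) = Kᗮ.subtypeL ∘L R ∘L Kᗮ.orthogonalProjectionOnto :=
  sqrt_eq_subtypeL_comp_comp_orthogonalProjectionOnto K hR hK fun v ↦ by
    rw [← comp_apply, hR2]
    simp [hs]

theorem coe_adjoint_apply_of_coe_apply {K : Submodule ℂ E} {Ks : Submodule ℂ F}
    {T : E →L[ℂ] F} {t : Kᗮ →L[ℂ] Ksᗮ} (ht : ∀ u, (t u : F) = T u)
    (hTK : ∀ x ∈ K, T x ∈ Ks) (v : Ksᗮ) : (adjoint t v : E) = adjoint T v := by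
  have hmem : adjoint T v ∈ Kᗮ := fun x hx ↦ by
    rw [adjoint_inner_right]
    exact Submodule.inner_right_of_mem_orthogonal (hTK x hx) v.2
  suffices adjoint t v = ⟨adjoint T v, hmem⟩ by rw [this]
  refine ext_inner_left ℂ fun u ↦ ?_
  rw [adjoint_inner_right, Submodule.coe_inner, Submodule.coe_inner, ht u,
    ← adjoint_inner_right]

end HilbertOperators

theorem characteristic_function_relation_general
    {H : Type*} [NormedAddCommGroup H] [InnerProductSpace ℂ H] [CompleteSpace H]
    (T : H →L[ℂ] H) (hT : ‖T‖ ≤ 1)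
    (K Ks : Submodule ℂ H)
    (hK : K = LinearMap.ker ((1 - adjoint T ∘L T : H →L[ℂ] H) : H →ₗ[ℂ] H))
    (hKs : Ks = LinearMap.ker ((1 - T ∘L adjoint T : H →L[ℂ] H) : H →ₗ[ℂ] H))
    (t : ↥Kᗮ →L[ℂ] ↥Ksᗮ) (ht : ∀ u : ↥Kᗮ, (t u : H) = T (u : H))
    (lam : ℂ) (hlam : ‖lam‖ < 1)
    (a : H × H)
    (haW : ∃ x : H, a = (x, lam • x))
    (x₀ : H) (hx₀ : x₀ ∈ K) (ap : ↥Kᗮ) (am : ↥Ksᗮ)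
    (hadec : a = (x₀, T x₀) + ((ap : H), 0) + (0, (am : H)))
    (Rp Sp : ↥Kᗮ →L[ℂ] ↥Kᗮ)
    (hRp : Rp.IsPositive ∧ Rp ∘L Rp = 1 - adjoint t ∘L t)
    (hSp : Sp ∘L Rp = 1 ∧ Rp ∘L Sp = 1)
    (Rm Sm : ↥Ksᗮ →L[ℂ] ↥Ksᗮ)
    (hRm : Rm.IsPositive ∧ Rm ∘L Rm = 1 - t ∘L adjoint t)
    (hSm : Sm ∘L Rm = 1 ∧ Rm ∘L Sm = 1)
    (Gp : ↥Kᗮ) (hGp : Gp = Sp ap - adjoint t (Sm am))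
    (Gm : ↥Ksᗮ) (hGm : Gm = t (Sp ap) - Sm am)
    (D Ds : H →L[ℂ] H)
    (hD : D = CFC.sqrt (1 - adjoint T ∘L T))
    (hDs : Ds = CFC.sqrt (1 - T ∘L adjoint T)) :
    (-(T (Gp : H)) + lam • Ds (Ring.inverse (1 - lam • adjoint T) (D (Gp : H))))
      + (Gm : H) = 0 := by
  have : CompleteSpace K := hK ▸ (isClosed_ker _).completeSpace_coe
  have : CompleteSpace Ks := hKs ▸ (isClosed_ker _).completeSpace_coe
  have hTTK : ∀ x ∈ K, adjoint T (T x) = x := fun x hx ↦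
    (sub_eq_zero.1 (LinearMap.mem_ker.1 (hK.le hx))).symm
  have hTK : ∀ x ∈ K, T x ∈ Ks := fun x hx ↦ by simp [hKs, hTTK x hx]
  have htadj := coe_adjoint_apply_of_coe_apply ht hTK
  obtain ⟨x, rfl⟩ := haW
  obtain ⟨hx, hlamx⟩ := Prod.ext_iff.1 hadec
  simp only [Prod.fst_add, Prod.snd_add, add_zero] at hx hlamx
  have hDrep := hD ▸ sqrt_one_sub_eq_of_restrict K (s := adjoint t ∘L t)
    (fun v ↦ by simp [htadj, ht]) hK.le hRp.1 hRp.2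
  have hDsrep := hDs ▸ sqrt_one_sub_eq_of_restrict Ks (s := t ∘L adjoint t)
    (fun v ↦ by simp [htadj, ht]) hKs.le hRm.1 hRm.2
  have hRpGp : Rp Gp = ap - adjoint t am := by
    rw [hGp, map_sub, ← comp_apply Rp Sp, hSp.2, ← comp_apply Rp,
      defect_comp_adjoint_eq_adjoint_comp_defect hRp.1 hRp.2 hRm.1 hRm.2, comp_apply,
      ← comp_apply Rm Sm, hSm.2, one_apply_eq_self, one_apply_eq_self]
  have hDGp : D Gp = ap - adjoint T am := by simp [hDrep, hRpGp, htadj]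
  have hU : IsUnit (1 - lam • adjoint T) :=
    isUnit_one_sub_smul_of_norm_le_one ((adjoint.norm_map T).trans_le hT) hlam
  have hinv : Ring.inverse (1 - lam • adjoint T) (D Gp) = x := by
    have hres : (1 - lam • adjoint T) x = D Gp := by
      rw [hDGp, sub_apply, one_apply_eq_self, smul_apply, ← map_smul, hlamx, map_add,
        hTTK x₀ hx₀, hx]
      abel
    rw [← hres, ← mul_apply_eq_comp, Ring.inverse_mul_cancel _ hU, one_apply_eq_self]
  have hDsx : lam • Ds x = Rm am := by
    rw [← map_smul, hlamx, hDsrep]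
    simp [Submodule.orthogonalProjectionOnto_orthogonal_apply_eq_zero (hTK x₀ hx₀)]
  have hRm_am : Rm am = Sm am - t (adjoint t (Sm am)) :=
    calc Rm am = (Rm ∘L Rm) (Sm am) := by rw [comp_apply, ← comp_apply Rm Sm, hSm.2]; rfl
      _ = Sm am - t (adjoint t (Sm am)) := by rw [hRm.2]; rfl
  rw [hinv, hDsx, ← ht Gp]
  simpa using congrArg ((↑) : Ksᗮ → H)
    (show -(t Gp) + Rm am + Gm = 0 by rw [hGp, hGm, hRm_am, map_sub]; abel)

/-- Let `T` be a contraction on `H` whose non-unitary part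
`t = T|_{K^⊥} : K^⊥ → K⋆^⊥` satisfies `‖t‖ < 1`. Fix `|λ| < 1` and let
`a ∈ W_λ ∩ A_T^⊥s` with components `a₊ ∈ K^⊥`, `a₋ ∈ K⋆^⊥` in the orthogonal
decomposition `a = (x₀, Tx₀) + (a₊, 0) + (0, a₋)` (`x₀ ∈ K`). With
`Γ'₊a = (Id − t*t)^{-1/2}a₊ − t*(Id − tt*)^{-1/2}a₋` and
`Γ'₋a = t(Id − t*t)^{-1/2}a₊ − (Id − tt*)^{-1/2}a₋`, one has
`Θ_T(λ)(Γ'₊a) + Γ'₋a = 0`, where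
`Θ_T(λ)u = −Tu + λ𝔇⋆(Id − λT*)⁻¹𝔇u` with `𝔇 = (Id − T*T)^{1/2}`,
`𝔇⋆ = (Id − TT*)^{1/2}` (positive square roots; `(Id − t*t)^{-1/2}` is the
inverse `Sp` of the positive square root `Rp` of `Id − t*t`, and similarly
`Sm`, `Rm` for `Id − tt*`; operator inverses on `H` are `Ring.inverse`). -/
theorem characteristic_function_relation
    {H : Type*} [NormedAddCommGroup H] [InnerProductSpace ℂ H] [CompleteSpace H]
    (T : H →L[ℂ] H) (hT : ‖T‖ ≤ 1)
    (K Ks : Submodule ℂ H)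
    (hK : K = LinearMap.ker ((1 - adjoint T ∘L T : H →L[ℂ] H) : H →ₗ[ℂ] H))
    (hKs : Ks = LinearMap.ker ((1 - T ∘L adjoint T : H →L[ℂ] H) : H →ₗ[ℂ] H))
    (t : ↥Kᗮ →L[ℂ] ↥Ksᗮ) (ht : ∀ u : ↥Kᗮ, (t u : H) = T (u : H))
    (htnorm : ‖t‖ < 1)
    (lam : ℂ) (hlam : ‖lam‖ < 1)
    (a : H × H)
    (haW : ∃ x : H, a = (x, lam • x))
    (haATs : ∀ b ∈ {p : H × H | ∃ x ∈ K, p = (x, T x)},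
      Complex.I * ⟪b.1, a.1⟫_ℂ - Complex.I * ⟪b.2, a.2⟫_ℂ = 0)
    (x₀ : H) (hx₀ : x₀ ∈ K) (ap : ↥Kᗮ) (am : ↥Ksᗮ)
    (hadec : a = (x₀, T x₀) + ((ap : H), 0) + (0, (am : H)))
    (Rp Sp : ↥Kᗮ →L[ℂ] ↥Kᗮ)
    (hRp : Rp.IsPositive ∧ Rp ∘L Rp = 1 - adjoint t ∘L t)
    (hSp : Sp ∘L Rp = 1 ∧ Rp ∘L Sp = 1)
    (Rm Sm : ↥Ksᗮ →L[ℂ] ↥Ksᗮ)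
    (hRm : Rm.IsPositive ∧ Rm ∘L Rm = 1 - t ∘L adjoint t)
    (hSm : Sm ∘L Rm = 1 ∧ Rm ∘L Sm = 1)
    (Gp : ↥Kᗮ) (hGp : Gp = Sp ap - adjoint t (Sm am))
    (Gm : ↥Ksᗮ) (hGm : Gm = t (Sp ap) - Sm am)
    (D Ds : H →L[ℂ] H)
    (hD : D = CFC.sqrt (1 - adjoint T ∘L T))
    (hDs : Ds = CFC.sqrt (1 - T ∘L adjoint T)) :
    (-(T (Gp : H)) + lam • Ds (Ring.inverse (1 - lam • adjoint T) (D (Gp : H))))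
      + (Gm : H) = 0 :=
  characteristic_function_relation_general T hT K Ks hK hKs t ht lam hlam a haW x₀ hx₀ ap am hadec
    Rp Sp hRp hSp Rm Sm hRm hSm Gp hGp Gm hGm D Ds hD hDs
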